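/- Let v : ℕ → ℝ be a nonincreasing sequence with prefix sums u, and linear cost c(j) = λ·j + δ, λ > 0. Run the marking procedure: mark[j] is set to 0 if there exists i < j with (u(j) - u(i))/(c(j) - c(i)) < C where C = v(K)/λ for some K ≤ N. Then every index j ≤ K remains marked, i.e., (u(j) - u(i))/(c(j) - c(i)) ≥ C for all 1 ≤ i < j ≤ K. -/
import Mathlib

lemma v_anti (v : ℕ → ℝ) (hv : ∀ s, 1 ≤ s → v (s + 1) ≤ v s) :
    ∀ a b, 1 ≤ a → a ≤ b → v b ≤ v a := by
  intro a b ha hab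
  induction b with
  | zero => omega
  | succ n ih =>
    rcases Nat.lt_or_ge a (n+1) with h | h
    · have hn : 1 ≤ n := by omega
      exact le_trans (hv n hn) (ih (by omega))
    · have : a = n + 1 := by omega
      simp [this]

/-- With nonincreasing `v`, prefix sums `u`, linear cost `c j = λ j + δ` (`λ > 0`)
and threshold `C = v K / λ` with `K ≤ N`, every index `j ≤ K` survives the
marking procedure of Algorithm 1: all its secant slopes from below are `≥ C`. -/
theorem algorithm1_marks_up_to_K (v : ℕ → ℝ)
    (hv : ∀ s, 1 ≤ s → v (s + 1) ≤ v s)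
    (lam δ : ℝ) (hlam : 0 < lam)
    (u c : ℕ → ℝ) (hu : ∀ k, u k = ∑ s ∈ Finset.Icc 1 k, v s)
    (hc : ∀ j, c j = lam * j + δ)
    (N K : ℕ) (hKN : K ≤ N) (C : ℝ) (hC : C = v K / lam) :
    ∀ i j, 1 ≤ i → i < j → j ≤ K → C ≤ (u j - u i) / (c j - c i) := by
  intro i j hi hij hjK
  have hcd : c j - c i = lam * (j - i : ℝ) := by
    rw [hc, hc]; ring
  have hji : (0:ℝ) < (j:ℝ) - i := by
    have : (i:ℝ) < j := by exact_mod_cast hij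
    linarith
  have hcpos : 0 < c j - c i := by
    rw [hcd]; positivity
  have hsum : u j - u i = ∑ s ∈ Finset.Ioc i j, v s := by
    rw [hu, hu]
    have h1 : Finset.Icc 1 j = Finset.Icc 1 i ∪ Finset.Ioc i j := by
      ext x; simp [Finset.mem_Icc, Finset.mem_Ioc, Finset.mem_union]; omega
    have h2 : Disjoint (Finset.Icc 1 i) (Finset.Ioc i j) := by
      rw [Finset.disjoint_left]; intro x; simp; omega
    rw [h1, Finset.sum_union h2]; ring
  have hlb : (j - i : ℝ) * v K ≤ u j - u i := by
    rw [hsum]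
    have hcard : (Finset.Ioc i j).card = j - i := Nat.card_Ioc i j
    calc (j - i : ℝ) * v K = ∑ _s ∈ Finset.Ioc i j, v K := by
          rw [Finset.sum_const, nsmul_eq_mul, hcard]
          congr 1
          have : (i:ℝ) ≤ j := le_of_lt (by exact_mod_cast hij)
          push_cast [Nat.cast_sub (le_of_lt hij)]
          ring
      _ ≤ ∑ s ∈ Finset.Ioc i j, v s := by
          apply Finset.sum_le_sum
          intro s hs
          simp only [Finset.mem_Ioc] at hs
          exact v_anti v hv s K (by omega) (by omega)
  rw [hC, div_le_div_iff₀ hlam hcpos, hcd]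
  calc v K * (lam * ((j:ℝ) - i)) = ((j:ℝ) - i) * v K * lam := by ring
    _ ≤ (u j - u i) * lam := by
        apply mul_le_mul_of_nonneg_right hlb (le_of_lt hlam)
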